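/- arXiv:0806.2357 — 2 statements merged into one kernel-verified Lean document; each statement's English description precedes it below -/
import Mathlib

section
/- For the Fourier matrix u on ℤ/nℤ, the complex dimension of the subspace {f : ZMod n × ZMod n → ℂ | C_u f = D_u f} (the eigenvalue-1 eigenspace of the Berezin transform) equals the number of pairs (r,s) ∈ (ZMod n)² with r*s = 0. -/
open Finset Matrix

/-- The symbol-to-operator map `C_u` as a complex-linear map. -/
noncomputable def CL {ι : Type*} [Fintype ι] (u : Matrix ι ι ℂ) :
    ((ι × ι) → ℂ) →ₗ[ℂ] Matrix ι ι ℂ where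
  toFun f := fun k k' => ∑ l, u k l * f (k, l) * (starRingEnd ℂ) (u k' l)
  map_add' f g := by
    funext k k'
    simp [mul_add, add_mul, Finset.sum_add_distrib]
    rfl
  map_smul' c f := by
    funext k k'
    simp only [Pi.smul_apply, smul_eq_mul, RingHom.id_apply, Matrix.smul_apply]
    change _ = c * ∑ l, u k l * f (k, l) * (starRingEnd ℂ) (u k' l)
    rw [Finset.mul_sum]
    exact Finset.sum_congr rfl fun l _ => by ring

/-- The symbol-to-operator map `D_u` as a complex-linear map. -/
noncomputable def DL {ι : Type*} [Fintype ι] (u : Matrix ι ι ℂ) :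
    ((ι × ι) → ℂ) →ₗ[ℂ] Matrix ι ι ℂ where
  toFun f := fun k k' => ∑ l, u k l * f (k', l) * (starRingEnd ℂ) (u k' l)
  map_add' f g := by
    funext k k'
    simp [mul_add, add_mul, Finset.sum_add_distrib]
    rfl
  map_smul' c f := by
    funext k k'
    simp only [Pi.smul_apply, smul_eq_mul, RingHom.id_apply, Matrix.smul_apply]
    change _ = c * ∑ l, u k l * f (k', l) * (starRingEnd ℂ) (u k' l)
    rw [Finset.mul_sum]
    exact Finset.sum_congr rfl fun l _ => by ring

/-!
Expand a symbol in the characters `p ↦ ψ (r * p.1 + s * p.2)` of `R × R`. Both `C_u` and `D_u`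
send the character indexed by `(r, s)` to the time–frequency shift `diag (ψ (r * ·)) * P_s`,
`D_u` with the extra scalar `ψ (r * s)`. Hence `(C_u - D_u) ∘ Φ = Θ ∘ diag (1 - ψ (r * s))`, where
the synthesis maps `Φ` and `Θ` are injective by linear independence of characters, so the kernel
has dimension `#{(r, s) | ψ (r * s) = 1}`; for the standard character of `ℤ/nℤ` this means
`r * s = 0`.
-/

namespace AddChar

variable {S M : Type*} [CommRing S] [CommMonoid M] {ψ : AddChar S M}

theorem IsPrimitive.linearCombination_mulShift_injective [Fintype S] {ψ : AddChar S ℂ}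
    (hψ : ψ.IsPrimitive) :
    Function.Injective (Fintype.linearCombination ℂ fun a => ⇑(ψ.mulShift a)) :=
  ((AddChar.linearIndependent S ℂ).comp _
    (to_mulShift_inj_of_isPrimitive hψ)).fintypeLinearCombination_injective

def coprodSelf (ψ : AddChar S M) : AddChar (S × S) M :=
  ψ.compAddMonoidHom ((AddMonoidHom.id S).coprod (AddMonoidHom.id S))

@[simp]
theorem coprodSelf_apply (p : S × S) : ψ.coprodSelf p = ψ (p.1 + p.2) := rfl

theorem IsPrimitive.coprodSelf (hψ : ψ.IsPrimitive) : ψ.coprodSelf.IsPrimitive := by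
  rintro ⟨a, b⟩ hab h
  have hshift (x y : S) : ψ (a * x + b * y) = 1 := by
    simpa using DFunLike.congr_fun h (x, y)
  obtain ha | hb : a ≠ 0 ∨ b ≠ 0 := by
    by_contra! hab'
    exact hab (Prod.ext hab'.1 hab'.2)
  · exact hψ ha (DFunLike.ext _ _ fun x => by simpa using hshift x 0)
  · exact hψ hb (DFunLike.ext _ _ fun y => by simpa using hshift 0 y)

end AddChar

theorem LinearMap.finrank_ker_eq_of_comp_eq {K V V' W W' : Type*} [Ring K]
    [AddCommGroup V] [Module K V] [AddCommGroup V'] [Module K V'] [AddCommGroup W] [Module K W]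
    [AddCommGroup W'] [Module K W'] {A : V →ₗ[K] W} {Φ : V' ≃ₗ[K] V} {Θ : W' →ₗ[K] W}
    {M : V' →ₗ[K] W'} (hΘ : Function.Injective Θ) (h : A ∘ₗ Φ.toLinearMap = Θ ∘ₗ M) :
    Module.finrank K (ker A) = Module.finrank K (ker M) := by
  have hker : ker M = (ker A).comap Φ.toLinearMap := by
    rw [← ker_comp, h, ker_comp, ker_eq_bot.2 hΘ, Submodule.comap_bot]
  rw [hker, Submodule.comap_equiv_eq_map_symm, LinearEquiv.finrank_map_eq]

theorem Matrix.finrank_ker_toLin'_diagonal {m K : Type*} [Fintype m] [DecidableEq m] [Field K]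
    (w : m → K) :
    Module.finrank K (LinearMap.ker (toLin' (diagonal w))) = Nat.card {i // w i = 0} := by
  classical
  have h := LinearMap.finrank_range_add_finrank_ker (toLin' (diagonal w))
  rw [toLin'_apply', ← rank, rank_diagonal, Module.finrank_fintype_fun_eq_card] at h
  simp only [ne_eq, Fintype.card_subtype_compl] at h
  have hle := Fintype.card_subtype_le fun i => w i = 0
  rw [Nat.card_eq_fintype_card, toLin'_apply']
  omega

theorem CL_apply {ι : Type*} [Fintype ι] (u : Matrix ι ι ℂ) (f : ι × ι → ℂ) (k k' : ι) :
    CL u f k k' = ∑ l, u k l * f (k, l) * starRingEnd ℂ (u k' l) := rfl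

theorem DL_apply {ι : Type*} [Fintype ι] (u : Matrix ι ι ℂ) (f : ι × ι → ℂ) (k k' : ι) :
    DL u f k k' = ∑ l, u k l * f (k', l) * starRingEnd ℂ (u k' l) := rfl

section FourierMatrix

variable {R : Type*} [CommRing R] [Fintype R] {ψ : AddChar R ℂ}

noncomputable def fourierSynthesis (ψ : AddChar R ℂ) : (R × R → ℂ) →ₗ[ℂ] (R × R → ℂ) :=
  Fintype.linearCombination ℂ fun q => ⇑(ψ.coprodSelf.mulShift q)

theorem fourierSynthesis_apply (g : R × R → ℂ) (p : R × R) :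
    fourierSynthesis ψ g p = ∑ q, g q * ψ (q.1 * p.1 + q.2 * p.2) := by
  simp [fourierSynthesis, Fintype.linearCombination_apply, AddChar.mulShift_apply]

theorem fourierSynthesis_injective (hψ : ψ.IsPrimitive) :
    Function.Injective (fourierSynthesis ψ) :=
  hψ.coprodSelf.linearCombination_mulShift_injective

-- `g ↦ ∑ g (r, s) • diag (ψ (r * ·)) * P_s` with `P_s` the shift `e_k ↦ e_(k+s)`
noncomputable def timeFreqSynthesis (ψ : AddChar R ℂ) : (R × R → ℂ) →ₗ[ℂ] Matrix R R ℂ where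
  toFun g := of fun k k' => ∑ r, g (r, k' - k) * ψ (r * k)
  map_add' f g := by ext k k'; simp [add_mul, sum_add_distrib]
  map_smul' c f := by ext k k'; simp [mul_sum, mul_assoc]

theorem timeFreqSynthesis_apply (g : R × R → ℂ) (k k' : R) :
    timeFreqSynthesis ψ g k k' = ∑ r, g (r, k' - k) * ψ (r * k) := rfl

theorem timeFreqSynthesis_injective (hψ : ψ.IsPrimitive) :
    Function.Injective (timeFreqSynthesis ψ) := by
  rw [← LinearMap.ker_eq_bot, LinearMap.ker_eq_bot']
  intro g hg
  ext ⟨r, s⟩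
  have hrow : Fintype.linearCombination ℂ (fun r => ⇑(ψ.mulShift r)) (fun r => g (r, s)) = 0 := by
    ext k
    simpa [Fintype.linearCombination_apply, timeFreqSynthesis_apply, AddChar.mulShift_apply]
      using congr_fun (congr_fun hg k) (k + s)
  exact congr_fun (hψ.linearCombination_mulShift_injective (hrow.trans (map_zero _).symm)) r

variable [DecidableEq R] {u : Matrix R R ℂ} (hψ : ψ.IsPrimitive)
  (hu : ∀ k l, u k l = ψ (k * l) / √(Fintype.card R))
include hψ hu

theorem sum_mul_char_mul_conj (c s k k' : R) :
    ∑ l, u k l * ψ (c + s * l) * starRingEnd ℂ (u k' l) = if k + s = k' then ψ c else 0 := by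
  have hcard : (√(Fintype.card R) : ℂ) * √(Fintype.card R) = Fintype.card R := by
    rw [← Complex.ofReal_mul, Real.mul_self_sqrt (Nat.cast_nonneg _), Complex.ofReal_natCast]
  have hterm (l : R) : u k l * ψ (c + s * l) * starRingEnd ℂ (u k' l) =
      ψ c * ψ (l * (k + s - k')) / Fintype.card R := by
    have hchar : ψ (k * l) * ψ (c + s * l) * ψ (-(k' * l)) = ψ c * ψ (l * (k + s - k')) := by
      simp only [← AddChar.map_add_eq_mul]
      ring_nf
    rw [hu, hu, map_div₀, Complex.conj_ofReal, ← AddChar.map_neg_eq_conj, ← hcard, ← hchar]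
    ring
  rw [sum_congr rfl fun l _ => hterm l, ← sum_div, ← mul_sum, AddChar.sum_mulShift _ hψ]
  by_cases h : k + s = k'
  · simp [h, Fintype.card_ne_zero]
  · simp [h, sub_eq_zero]

theorem sum_mul_fourierSynthesis_mul_conj (g : R × R → ℂ) (a k k' : R) :
    ∑ l, u k l * fourierSynthesis ψ g (a, l) * starRingEnd ℂ (u k' l) =
      ∑ r, g (r, k' - k) * ψ (r * a) := by
  have hq (q : R × R) : ∑ l, u k l * (g q * ψ (q.1 * a + q.2 * l)) * starRingEnd ℂ (u k' l) =
      g q * if k + q.2 = k' then ψ (q.1 * a) else 0 := by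
    rw [← sum_mul_char_mul_conj hψ hu, mul_sum]
    exact sum_congr rfl fun l _ => by ring
  simp_rw [fourierSynthesis_apply, mul_sum, sum_mul]
  rw [sum_comm]
  simp_rw [hq, Fintype.sum_prod_type, mul_ite, mul_zero]
  simp [← eq_sub_iff_add_eq']

theorem CL_sub_DL_comp_fourierSynthesis :
    (CL u - DL u) ∘ₗ fourierSynthesis ψ =
      timeFreqSynthesis ψ ∘ₗ toLin' (diagonal fun q : R × R => 1 - ψ (q.1 * q.2)) := by
  refine LinearMap.ext fun g => ?_
  ext k k'
  rw [LinearMap.comp_apply, LinearMap.sub_apply, Matrix.sub_apply, CL_apply, DL_apply,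
    sum_mul_fourierSynthesis_mul_conj hψ hu, sum_mul_fourierSynthesis_mul_conj hψ hu,
    LinearMap.comp_apply, timeFreqSynthesis_apply, ← sum_sub_distrib]
  refine sum_congr rfl fun r _ => ?_
  have hshift : ψ (r * k') = ψ (r * (k' - k)) * ψ (r * k) := by
    rw [← AddChar.map_add_eq_mul]
    ring_nf
  simp only [toLin'_apply, mulVec_diagonal, hshift]
  ring

theorem finrank_ker_CL_sub_DL :
    Module.finrank ℂ (LinearMap.ker (CL u - DL u)) =
      Nat.card {q : R × R // ψ (q.1 * q.2) = 1} := by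
  rw [LinearMap.finrank_ker_eq_of_comp_eq
      (Φ := LinearEquiv.ofInjectiveEndo _ (fourierSynthesis_injective hψ))
      (timeFreqSynthesis_injective hψ) (CL_sub_DL_comp_fourierSynthesis hψ hu),
    Matrix.finrank_ker_toLin'_diagonal]
  simp_rw [sub_eq_zero, eq_comm]

end FourierMatrix

theorem stmt12_general (n : ℕ) [NeZero n]
    (ε : ZMod n → ℂ)
    (hε : ∀ m : ZMod n, ε m = Complex.exp (2 * Real.pi * Complex.I * m.val / n))
    (u : Matrix (ZMod n) (ZMod n) ℂ)
    (hu : ∀ k l, u k l = ε (k * l) / Real.sqrt n) :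
    Module.finrank ℂ ↥(LinearMap.ker (CL u - DL u)) =
      (Finset.univ.filter fun p : ZMod n × ZMod n => p.1 * p.2 = 0).card := by
  obtain rfl : ε = ZMod.stdAddChar :=
    funext fun m => by rw [hε, ZMod.stdAddChar_apply, ZMod.toCircle_apply]
  rw [finrank_ker_CL_sub_DL (ZMod.isPrimitive_stdAddChar n) (by simpa [ZMod.card] using hu),
    Nat.card_eq_fintype_card, Fintype.card_subtype]
  congr! 2 with q
  exact ZMod.injective_stdAddChar.eq_iff' (AddChar.map_zero_eq_one _)

/-- for the Fourier matrix `u k l = ε(k·l)/√n` on `ℤ/nℤ`, the complex dimension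
of the eigenvalue-1 eigenspace `{f | C_u f = D_u f}` of the Berezin transform equals the number
of pairs `(r,s)` in `ℤ/nℤ × ℤ/nℤ` with `r·s = 0`. -/
theorem stmt12 (n : ℕ) [NeZero n] (hn : 1 ≤ n)
    (ε : ZMod n → ℂ)
    (hε : ∀ m : ZMod n, ε m = Complex.exp (2 * Real.pi * Complex.I * m.val / n))
    (u : Matrix (ZMod n) (ZMod n) ℂ)
    (hu : ∀ k l, u k l = ε (k * l) / Real.sqrt n) :
    Module.finrank ℂ ↥(LinearMap.ker (CL u - DL u)) =
      (Finset.univ.filter fun p : ZMod n × ZMod n => p.1 * p.2 = 0).card :=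
  stmt12_general n ε hε u hu
end

section
/- Let θ ∈ ℂ with |θ| = 1, θ ≠ 1, θ ≠ -1, and let u be the n×n matrix with u k l = (if k = l then 1 else 0) + (θ - 1)/n. Then the complex dimension of the subspace {f : Fin n × Fin n → ℂ | C_u f = D_u f} (the eigenvalue-1 eigenspace of the Berezin transform I_u) equals exactly 2n - 1. -/
open Finset Matrix

/-!
Put `α = (θ - 1) / n` and `β = conj α`. Then `u = 1 + α J` with `J` the all-ones matrix,
unitarity of `u` is the relation `α + β + n α β = 0`, and `θ ∉ ℝ` gives `α ≠ β`.
Expanding `u` and `conj u`, the equation `C_u f = D_u f` becomes a linear system (`BerezinEqns`)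
in the entries, the diagonal `d` and the row sums `r` of `f`. Combining its equations at
`(k, l)` and `(l, k)` gives `f (k, l) = d l + (r k - r l) / n`, and summing all of them gives
`∑ r = n ∑ d`; conversely every pair `(d, r)` with `∑ r = n ∑ d` arises this way. So the
eigenspace is isomorphic to a hyperplane of `ℂⁿ × ℂⁿ`.
-/

open ComplexConjugate

section DiagRowSum

variable {K ι : Type*} [Field K] [Fintype ι]

def diagRowSum : (ι × ι → K) →ₗ[K] (ι → K) × (ι → K) where
  toFun f := (fun k => f (k, k), fun k => ∑ l, f (k, l))
  map_add' f g := by ext k <;> simp [sum_add_distrib]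
  map_smul' c f := by ext k <;> simp [mul_sum]

def ofDiagRowSum : (ι → K) × (ι → K) →ₗ[K] (ι × ι → K) where
  toFun p kl := p.1 kl.2 + (p.2 kl.1 - p.2 kl.2) / Fintype.card ι
  map_add' p q := by ext; simp only [Prod.fst_add, Prod.snd_add, Pi.add_apply]; ring
  map_smul' c p := by ext; simp only [Prod.smul_fst, Prod.smul_snd, Pi.smul_apply, smul_eq_mul,
    RingHom.id_apply]; ring

def rowSumDefect : (ι → K) × (ι → K) →ₗ[K] K where
  toFun p := ∑ k, p.2 k - Fintype.card ι * ∑ k, p.1 k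
  map_add' p q := by simp only [Prod.snd_add, Prod.fst_add, Pi.add_apply, sum_add_distrib]; ring
  map_smul' c p := by simp only [Prod.smul_snd, Prod.smul_fst, Pi.smul_apply, smul_eq_mul,
    ← mul_sum, RingHom.id_apply]; ring

lemma rowSum_ofDiagRowSum (hn : (Fintype.card ι : K) ≠ 0) {p : (ι → K) × (ι → K)}
    (hp : rowSumDefect p = 0) (k : ι) :
    ∑ l, ofDiagRowSum p (k, l) = p.2 k := by
  have hp' : ∑ l, p.2 l = Fintype.card ι * ∑ l, p.1 l := sub_eq_zero.1 hp
  simp only [ofDiagRowSum, LinearMap.coe_mk, AddHom.coe_mk]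
  rw [sum_add_distrib, ← sum_div, sum_sub_distrib, sum_const, card_univ, nsmul_eq_mul, hp']
  field_simp
  ring

lemma diagRowSum_ofDiagRowSum (hn : (Fintype.card ι : K) ≠ 0) {p : (ι → K) × (ι → K)}
    (hp : rowSumDefect p = 0) :
    diagRowSum (ofDiagRowSum p) = p := by
  ext k
  · simp [diagRowSum, ofDiagRowSum]
  · exact rowSum_ofDiagRowSum hn hp k

lemma finrank_ker_rowSumDefect (hn : (Fintype.card ι : K) ≠ 0) :
    Module.finrank K (LinearMap.ker (rowSumDefect : (ι → K) × (ι → K) →ₗ[K] K)) =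
      2 * Fintype.card ι - 1 := by
  have hsurj : Function.Surjective (rowSumDefect : (ι → K) × (ι → K) →ₗ[K] K) := fun c =>
    ⟨(0, fun _ => c / Fintype.card ι), by simp [rowSumDefect, mul_div_cancel₀ _ hn]⟩
  have := LinearMap.finrank_range_add_finrank_ker (rowSumDefect : (ι → K) × (ι → K) →ₗ[K] K)
  rw [LinearMap.range_eq_top.2 hsurj, finrank_top, Module.finrank_self, Module.finrank_prod,
    Module.finrank_pi] at this
  omega

end DiagRowSum

section BerezinEqns

variable {K ι : Type*} [Field K] [Fintype ι]

def BerezinEqns (α β : K) (f : ι × ι → K) : Prop :=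
  ∀ k k', β * f (k, k) + α * f (k, k') + α * β * ∑ l, f (k, l) =
    β * f (k', k) + α * f (k', k') + α * β * ∑ l, f (k', l)

variable {α β : K} {f : ι × ι → K}

lemma BerezinEqns.rowSumDefect_diagRowSum (hαβ : α ≠ β) (hf : BerezinEqns α β f) :
    rowSumDefect (diagRowSum f) = 0 := by
  have h : ∑ k, ∑ k', (β * f (k, k) + α * f (k, k') + α * β * ∑ l, f (k, l)) =
      ∑ k, ∑ k', (β * f (k', k) + α * f (k', k') + α * β * ∑ l, f (k', l)) :=
    sum_congr rfl fun k _ => sum_congr rfl fun k' _ => hf k k'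
  simp only [sum_add_distrib, ← mul_sum, sum_const, card_univ, nsmul_eq_mul] at h
  rw [sum_comm (f := fun k k' => f (k', k))] at h
  simp only [rowSumDefect, diagRowSum, LinearMap.coe_mk, AddHom.coe_mk]
  have h' : (α - β) * (∑ k, ∑ l, f (k, l) - Fintype.card ι * ∑ k, f (k, k)) = 0 := by
    linear_combination h
  exact (mul_eq_zero.1 h').resolve_left (sub_ne_zero.2 hαβ)

lemma BerezinEqns.ofDiagRowSum_diagRowSum (hn : (Fintype.card ι : K) ≠ 0)
    (hrel : α + β + Fintype.card ι * α * β = 0) (hαβ : α ≠ β) (hsum : α + β ≠ 0)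
    (hf : BerezinEqns α β f) : ofDiagRowSum (diagRowSum f) = f := by
  ext ⟨k, l⟩
  simp only [ofDiagRowSum, diagRowSum, LinearMap.coe_mk, AddHom.coe_mk]
  have h : (α + β) * (α - β) * ((Fintype.card ι : K) * (f (k, l) - f (l, l))
      - ((∑ m, f (k, m)) - ∑ m, f (l, m))) = 0 := by
    linear_combination (Fintype.card ι : K) * α * hf k l + (Fintype.card ι : K) * β * hf l k
      - ((α - β) * ((∑ m, f (k, m)) - ∑ m, f (l, m))) * hrel
  rw [mul_eq_zero, or_iff_right (mul_ne_zero hsum (sub_ne_zero.2 hαβ)), sub_eq_zero] at h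
  rw [← h]
  field_simp
  ring

lemma berezinEqns_ofDiagRowSum (hn : (Fintype.card ι : K) ≠ 0)
    (hrel : α + β + Fintype.card ι * α * β = 0) {p : (ι → K) × (ι → K)}
    (hp : rowSumDefect p = 0) : BerezinEqns α β (ofDiagRowSum p) := by
  intro k k'
  rw [rowSum_ofDiagRowSum hn hp, rowSum_ofDiagRowSum hn hp]
  simp only [ofDiagRowSum, LinearMap.coe_mk, AddHom.coe_mk]
  field_simp
  linear_combination (p.2 k - p.2 k') * hrel

end BerezinEqns

theorem finrank_eq_of_forall_mem_iff_berezinEqns {K ι : Type*} [Field K] [Fintype ι] {α β : K}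
    (hn : (Fintype.card ι : K) ≠ 0) (hrel : α + β + Fintype.card ι * α * β = 0) (hαβ : α ≠ β)
    (hsum : α + β ≠ 0) {V : Submodule K (ι × ι → K)} (hV : ∀ f, f ∈ V ↔ BerezinEqns α β f) :
    Module.finrank K V = 2 * Fintype.card ι - 1 := by
  let e : V ≃ₗ[K] LinearMap.ker (rowSumDefect : (ι → K) × (ι → K) →ₗ[K] K) :=
    LinearEquiv.ofLinearMap
      (diagRowSum.restrict fun f hf => ((hV f).1 hf).rowSumDefect_diagRowSum hαβ)
      (ofDiagRowSum.restrict fun p hp => (hV _).2 (berezinEqns_ofDiagRowSum hn hrel hp))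
      (LinearMap.ext fun p => Subtype.ext (diagRowSum_ofDiagRowSum hn p.2))
      (LinearMap.ext fun f => Subtype.ext
        (((hV f).1 f.2).ofDiagRowSum_diagRowSum hn hrel hαβ hsum))
  rw [e.finrank_eq, finrank_ker_rowSumDefect hn]

section KerCLSubDL

variable {ι : Type*} [Fintype ι] [DecidableEq ι] {u : Matrix ι ι ℂ} {α : ℂ}

lemma sum_mul_mul_conj_of_eq_ite_add (hu : ∀ k l, u k l = (if k = l then 1 else 0) + α)
    (h : ι → ℂ) (k k' : ι) :
    ∑ l, u k l * h l * conj (u k' l) =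
      (if k = k' then h k' else 0) + conj α * h k + α * h k' + α * conj α * ∑ l, h l := by
  simp only [hu, map_add, apply_ite, map_one, map_zero, add_mul, mul_add, ite_mul, one_mul,
    zero_mul, mul_one, mul_zero, sum_add_distrib, sum_ite_eq, mem_univ, if_true]
  rw [← sum_mul, ← mul_sum]
  ring

lemma mem_ker_CL_sub_DL_iff (hu : ∀ k l, u k l = (if k = l then 1 else 0) + α)
    (f : ι × ι → ℂ) : f ∈ LinearMap.ker (CL u - DL u) ↔ BerezinEqns α (conj α) f := by
  rw [LinearMap.mem_ker, LinearMap.sub_apply, sub_eq_zero, ← Matrix.ext_iff]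
  refine forall₂_congr fun k k' => ?_
  change ∑ l, u k l * f (k, l) * conj (u k' l) = ∑ l, u k l * f (k', l) * conj (u k' l) ↔ _
  rw [sum_mul_mul_conj_of_eq_ite_add hu (fun l => f (k, l)),
    sum_mul_mul_conj_of_eq_ite_add hu (fun l => f (k', l))]
  by_cases hkk' : k = k'
  · subst hkk'; simp
  · simp only [hkk', if_false, zero_add]

end KerCLSubDL

lemma conj_ne_self_of_norm_eq_one {θ : ℂ} (hθ : ‖θ‖ = 1) (hθ1 : θ ≠ 1) (hθ2 : θ ≠ -1) :
    conj θ ≠ θ := by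
  intro h
  have hsq : θ * θ = 1 := by
    nth_rw 2 [← h]
    rw [Complex.mul_conj', hθ]
    norm_num
  exact (mul_self_eq_one_iff.1 hsq).elim hθ1 hθ2

/-- for the unitary matrix `u k l = δ_{kl} + (θ - 1)/n` with `|θ| = 1`,
`θ ≠ ±1`, the eigenvalue-1 eigenspace `{f | C_u f = D_u f}` of the Berezin transform `I_u`
has complex dimension exactly `2n - 1`. -/
theorem stmt17 (n : ℕ) (hn : 1 ≤ n) (θ : ℂ)
    (hθ : ‖θ‖ = 1) (hθ1 : θ ≠ 1) (hθ2 : θ ≠ -1)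
    (u : Matrix (Fin n) (Fin n) ℂ)
    (hu : ∀ k l, u k l = (if k = l then 1 else 0) + (θ - 1) / (n : ℂ)) :
    Module.finrank ℂ ↥(LinearMap.ker (CL u - DL u)) = 2 * n - 1 := by
  have hn0 : (n : ℂ) ≠ 0 := Nat.cast_ne_zero.2 (by omega)
  set α := (θ - 1) / (n : ℂ) with hα
  have hθα : θ = 1 + n * α := by rw [hα, mul_div_cancel₀ _ hn0]; ring
  have hrel : α + conj α + n * α * conj α = 0 := by
    have hunit : θ * conj θ = 1 := by rw [Complex.mul_conj', hθ]; norm_num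
    rw [hθα, map_add, map_one, map_mul, map_natCast] at hunit
    exact mul_left_cancel₀ hn0 (by linear_combination hunit)
  have hαβ : α ≠ conj α := fun h => conj_ne_self_of_norm_eq_one hθ hθ1 hθ2 <| by
    rw [hθα, map_add, map_one, map_mul, map_natCast, ← h]
  have hα0 : α ≠ 0 := div_ne_zero (sub_ne_zero.2 hθ1) hn0
  have hsum : α + conj α ≠ 0 := by
    rw [eq_neg_of_add_eq_zero_left hrel, neg_ne_zero]
    exact mul_ne_zero (mul_ne_zero hn0 hα0) ((map_ne_zero _).2 hα0)
  simpa using finrank_eq_of_forall_mem_iff_berezinEqns (ι := Fin n) (by simpa using hn0)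
    (by simpa using hrel) hαβ hsum (mem_ker_CL_sub_DL_iff hu)
end
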